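/- arXiv:1603.02660 — 5 statements merged into one kernel-verified Lean document; each statement's English description precedes it below -/
import Mathlib

section
/- Let τ* ∈ ℂ with Im τ* > 0 and set K = conj(τ*) − τ*. For any τ ∈ ℂ with Im τ > 0, define s = (τ* − conj(τ*))·(τ − τ*)/(τ − conj(τ*)) and j = (τ − conj(τ*))/(τ* − conj(τ*)). Then j²·(1/Im τ) − 2i·j·(1/(τ* − conj(τ*))) = 2i·(conj(s)/K²)/(1 + s·conj(s)/K²). -/
/-!
Writing `a = τ*`, `b = conj a`, `u = conj τ` and using `Im τ = (τ - u)/(2i)`, both sides are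
rational functions of the four independent quantities `τ, u, a, b`. The only nontrivial input is
the factorisation `1 + s·conj s/K² = (τ - u)(b - a)/((τ - b)(u - a))`, the algebraic form of
`1 - |w|² = 4 Im τ Im a/|τ - b|²` for the Cayley transform `w = (τ - a)/(τ - b)`; after it both sides
reduce to `2i (τ - b)(u - b)/((a - b)²(τ - u))`.
-/

open Complex ComplexConjugate

namespace Complex

lemma sub_conj_ne_zero_of_im_pos {z w : ℂ} (hz : 0 < z.im) (hw : 0 < w.im) : z - conj w ≠ 0 := by
  intro h
  have him := congrArg im h
  simp only [sub_im, conj_im, sub_neg_eq_add, zero_im] at him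
  linarith

lemma one_add_cayley_mul_conj_div_sq {a τ s : ℂ} (hτa : τ - conj a ≠ 0) (ha : a - conj a ≠ 0)
    (hs : s = (a - conj a) * (τ - a) / (τ - conj a)) :
    1 + s * conj s / (conj a - a) ^ 2 =
      (τ - conj τ) * (conj a - a) / ((τ - conj a) * (conj τ - a)) := by
  have haτ : conj τ - a ≠ 0 := by simpa using (map_ne_zero conj).mpr hτa
  have ha' : conj a - a ≠ 0 := by rwa [← neg_sub, neg_ne_zero]
  subst hs
  simp only [map_div₀, map_mul, map_sub, conj_conj]
  field_simp
  ring

end Complex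

/-- The Cayley transformation of the non-holomorphic quantity `Y(τ) = 1/Im τ`:
with `s` the normalized Cayley transform of `τ` based at `τ*` and `j` the associated
automorphy factor, one has
`j²·(1/Im τ) − 2i·j·(1/(τ* − conj τ*)) = 2i·(conj s/K²)/(1 + s·conj s/K²)`
where `K = conj τ* − τ*`. -/
theorem cayley_transform_of_Y
    (τstar : ℂ) (hτstar : 0 < τstar.im)
    (K : ℂ) (hK : K = (starRingEnd ℂ) τstar - τstar)
    (τ : ℂ) (hτ : 0 < τ.im)
    (s j : ℂ)
    (hs : s = (τstar - (starRingEnd ℂ) τstar) * (τ - τstar) / (τ - (starRingEnd ℂ) τstar))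
    (hj : j = (τ - (starRingEnd ℂ) τstar) / (τstar - (starRingEnd ℂ) τstar)) :
    j ^ 2 * (1 / (τ.im : ℂ)) - 2 * Complex.I * j * (1 / (τstar - (starRingEnd ℂ) τstar)) =
      2 * Complex.I * ((starRingEnd ℂ) s / K ^ 2) / (1 + s * (starRingEnd ℂ) s / K ^ 2) := by
  have hτa : τ - conj τstar ≠ 0 := sub_conj_ne_zero_of_im_pos hτ hτstar
  have haτ : conj τ - τstar ≠ 0 := by simpa using (map_ne_zero conj).mpr hτa
  have ha : τstar - conj τstar ≠ 0 := sub_conj_ne_zero_of_im_pos hτstar hτstar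
  have ha' : conj τstar - τstar ≠ 0 := by rwa [← neg_sub, neg_ne_zero]
  have hτ' : τ - conj τ ≠ 0 := sub_conj_ne_zero_of_im_pos hτ hτ
  subst hK
  rw [one_add_cayley_mul_conj_div_sq hτa ha hs, im_eq_sub_conj, hs, hj]
  simp only [map_div₀, map_mul, map_sub, conj_conj]
  field_simp
  ring
end

section
/- Let D ⊆ ℂ be a connected open set containing 0, and let f₁, f₂, f₃, f₄, f₅, f₆ : D → ℂ be holomorphic functions satisfying on D the equations f₁·f₄ = f₂·f₅, f₁·f₅′ = 2·f₅·f₁′, and 2·f₁·f₆ = f₁·f₃ + f₂·f₄, together with the boundary values f₁(0) = 1 and f₅(0) = 1/3. Then f₅ = f₁²/3, f₄ = f₁·f₂/3, and f₆ = (3·f₃ + f₂²)/6 on all of D. -/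
/-!
Where `f₁ ≠ 0`, the equation `f₁ f₅′ = 2 f₅ f₁′` says that `f₅ / f₁²` has zero derivative, so
near `0` it is the constant `f₅(0) / f₁(0)² = 1/3`. The identity theorem spreads `f₅ = f₁²/3`
over the connected set `D`. Substituting it into the two algebraic equations gives identities of
the form `f₁ · f = f₁ · g` between holomorphic functions; since `f₁(0) ≠ 0` they can be cancelled
near `0`, and the identity theorem again spreads `f = g` over `D`.
-/

open Filter Set Topology

section Analytic

variable {𝕜 E F : Type*} [NontriviallyNormedField 𝕜] [NormedAddCommGroup E] [NormedSpace 𝕜 E]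
  [NormedAddCommGroup F] [NormedSpace 𝕜 F]

theorem AnalyticOnNhd.eqOn_of_smul_eqOn {h : E → 𝕜} {f g : E → F} {U : Set E}
    (hf : AnalyticOnNhd 𝕜 f U) (hg : AnalyticOnNhd 𝕜 g U) (hUo : IsOpen U)
    (hU : IsPreconnected U) {z₀ : E} (h₀ : z₀ ∈ U) (hh : ContinuousAt h z₀) (hz₀ : h z₀ ≠ 0)
    (hfg : ∀ z ∈ U, h z • f z = h z • g z) : EqOn f g U := by
  refine hf.eqOn_of_preconnected_of_eventuallyEq hg hU h₀ ?_
  filter_upwards [hUo.mem_nhds h₀, hh.eventually_ne hz₀] with z hz hne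
  exact (smul_right_inj hne).1 (hfg z hz)

end Analytic

section Deriv

variable {𝕜 : Type*} [NontriviallyNormedField 𝕜]

theorem HasDerivAt.div_pow_of_mul_eq {f g : 𝕜 → 𝕜} {f' g' z : 𝕜} (n : ℕ)
    (hf : HasDerivAt f f' z) (hg : HasDerivAt g g' z) (hz : f z ≠ 0)
    (h : f z * g' = n * g z * f') : HasDerivAt (fun w => g w / f w ^ n) 0 z := by
  have hq := hg.fun_div (hf.fun_pow n) (pow_ne_zero n hz)
  suffices g' * f z ^ n - g z * (n * f z ^ (n - 1) * f') = 0 by rwa [this, zero_div] at hq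
  rcases n with _ | m
  · simp_all
  · calc _ = f z ^ m * (f z * g' - (m + 1 : ℕ) * g z * f') := by
          rw [Nat.add_sub_cancel]; ring
      _ = 0 := by rw [h, sub_self, mul_zero]

end Deriv

section RCLike

variable {𝕜 : Type*} [RCLike 𝕜]

theorem eventuallyEq_mul_pow_of_mul_deriv_eq {f g : 𝕜 → 𝕜} {z₀ : 𝕜} (n : ℕ)
    (hf : ∀ᶠ z in 𝓝 z₀, DifferentiableAt 𝕜 f z) (hg : ∀ᶠ z in 𝓝 z₀, DifferentiableAt 𝕜 g z)
    (h : ∀ᶠ z in 𝓝 z₀, f z * deriv g z = n * g z * deriv f z) (hz₀ : f z₀ ≠ 0) :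
    g =ᶠ[𝓝 z₀] fun z => g z₀ / f z₀ ^ n * f z ^ n := by
  obtain ⟨ε, hε, hball⟩ := Metric.eventually_nhds_iff_ball.1
    (hf.and (hg.and (h.and (hf.self_of_nhds.continuousAt.eventually_ne hz₀))))
  have hderiv : ∀ z ∈ Metric.ball z₀ ε, HasDerivAt (fun w => g w / f w ^ n) 0 z :=
    fun z hz => (hball z hz).1.hasDerivAt.div_pow_of_mul_eq n (hball z hz).2.1.hasDerivAt
      (hball z hz).2.2.2 (hball z hz).2.2.1
  have hconst : ∀ z ∈ Metric.ball z₀ ε, g z / f z ^ n = g z₀ / f z₀ ^ n := fun z hz =>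
    Metric.isOpen_ball.is_const_of_deriv_eq_zero (convex_ball z₀ ε).isPreconnected
      (fun w hw => (hderiv w hw).differentiableAt.differentiableWithinAt)
      (fun w hw => (hderiv w hw).deriv) hz (Metric.mem_ball_self hε)
  filter_upwards [Metric.ball_mem_nhds z₀ hε] with z hz
  rw [← hconst z hz, div_mul_cancel₀ _ (pow_ne_zero n (hball z hz).2.2.2)]

end RCLike

/-- From the WDVV equations `f₁f₄ = f₂f₅`, `f₁f₅′ = 2f₅f₁′`, `2f₁f₆ = f₁f₃ + f₂f₄` of the
FJRW theory of the Fermat cubic, with boundary values `f₁(0) = 1` and `f₅(0) = 1/3`, one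
solves `f₅ = f₁²/3`, `f₄ = f₁f₂/3`, `f₆ = (3f₃ + f₂²)/6`. -/
theorem fjrw_cubic_solve_f4_f5_f6
    (D : Set ℂ) (hD : IsOpen D) (hconn : IsConnected D) (h0 : (0 : ℂ) ∈ D)
    (f₁ f₂ f₃ f₄ f₅ f₆ : ℂ → ℂ)
    (hd₁ : DifferentiableOn ℂ f₁ D) (hd₂ : DifferentiableOn ℂ f₂ D)
    (hd₃ : DifferentiableOn ℂ f₃ D) (hd₄ : DifferentiableOn ℂ f₄ D)
    (hd₅ : DifferentiableOn ℂ f₅ D) (hd₆ : DifferentiableOn ℂ f₆ D)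
    (heq1 : ∀ z ∈ D, f₁ z * f₄ z = f₂ z * f₅ z)
    (heq2 : ∀ z ∈ D, f₁ z * deriv f₅ z = 2 * f₅ z * deriv f₁ z)
    (heq3 : ∀ z ∈ D, 2 * f₁ z * f₆ z = f₁ z * f₃ z + f₂ z * f₄ z)
    (hf₁0 : f₁ 0 = 1) (hf₅0 : f₅ 0 = 1 / 3) :
    ∀ z ∈ D,
      f₅ z = f₁ z ^ 2 / 3 ∧ f₄ z = f₁ z * f₂ z / 3 ∧ f₆ z = (3 * f₃ z + f₂ z ^ 2) / 6 := by
  have hU := hconn.isPreconnected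
  have hD0 : D ∈ 𝓝 (0 : ℂ) := hD.mem_nhds h0
  have ha₁ := hd₁.analyticOnNhd hD
  have ha₂ := hd₂.analyticOnNhd hD
  have hc₁ := hd₁.continuousOn.continuousAt hD0
  have h5 : EqOn f₅ (fun z => f₁ z ^ 2 / 3) D := by
    refine (hd₅.analyticOnNhd hD).eqOn_of_preconnected_of_eventuallyEq (ha₁.pow 2).div_const
      hU h0 ?_
    have hloc := eventuallyEq_mul_pow_of_mul_deriv_eq 2 (hd₁.eventually_differentiableAt hD0)
      (hd₅.eventually_differentiableAt hD0)
      (eventually_of_mem hD0 fun z hz => by exact_mod_cast heq2 z hz) (by simp [hf₁0])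
    filter_upwards [hloc] with z hz
    rw [hz, hf₅0, hf₁0]
    ring
  have h4 : EqOn f₄ (fun z => f₁ z * f₂ z / 3) D := by
    refine (hd₄.analyticOnNhd hD).eqOn_of_smul_eqOn (ha₁.mul ha₂).div_const hD hU h0 hc₁
      (by simp [hf₁0]) fun z hz => ?_
    simp only [smul_eq_mul, heq1 z hz, h5 hz]
    ring
  have h6 : EqOn f₆ (fun z => (3 * f₃ z + f₂ z ^ 2) / 6) D := by
    refine (hd₆.analyticOnNhd hD).eqOn_of_smul_eqOn
      ((analyticOnNhd_const.mul (hd₃.analyticOnNhd hD)).add (ha₂.pow 2)).div_const hD hU h0 hc₁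
      (by simp [hf₁0]) fun z hz => ?_
    have h3 := heq3 z hz
    rw [h4 hz] at h3
    simp only [smul_eq_mul]
    linear_combination h3 / 2
  exact fun z hz => ⟨h5 hz, h4 hz, h6 hz⟩
end

section
/- Let D ⊆ ℂ be open and let f₁, f₂, f₃ : D → ℂ be holomorphic functions satisfying the pillowcase WDVV system on D. Define g₁ = −f₁, g₂ = f₂ + 2f₃, g₃ = f₃. Then on D: g₁′ + 2g₂g₁ = 4g₁g₃, g₂′ + 2g₃g₂ + g₃′ = 2g₁² + 2g₃², and g₃′ + g₃² = g₁². -/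
open Complex

/-- The pillowcase WDVV system:
`f₁′ + 2f₁f₂ = 0`, `f₂′ + 2f₂f₃ + f₃′ = 0`, `f₃′ + f₃² = f₁²` on a set `U ⊆ ℂ`. -/
def PillowcaseWDVV (U : Set ℂ) (f₁ f₂ f₃ : ℂ → ℂ) : Prop :=
  ∀ z ∈ U,
    deriv f₁ z + 2 * f₁ z * f₂ z = 0 ∧
    deriv f₂ z + 2 * f₂ z * f₃ z + deriv f₃ z = 0 ∧
    deriv f₃ z + f₃ z ^ 2 = f₁ z ^ 2

theorem PillowcaseWDVV.narrow_at {U : Set ℂ} {f₁ f₂ f₃ : ℂ → ℂ} {z : ℂ}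
    (hf : PillowcaseWDVV U f₁ f₂ f₃) (hz : z ∈ U)
    (hf₂ : DifferentiableAt ℂ f₂ z) (hf₃ : DifferentiableAt ℂ f₃ z) :
    deriv (fun w => -f₁ w) z + 2 * (f₂ z + 2 * f₃ z) * (-f₁ z) = 4 * (-f₁ z) * f₃ z ∧
      deriv (fun w => f₂ w + 2 * f₃ w) z + 2 * f₃ z * (f₂ z + 2 * f₃ z) + deriv f₃ z =
          2 * (-f₁ z) ^ 2 + 2 * f₃ z ^ 2 ∧
      deriv f₃ z + f₃ z ^ 2 = (-f₁ z) ^ 2 := by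
  obtain ⟨h₁, h₂, h₃⟩ := hf z hz
  have deriv_g₂ : deriv (fun w => f₂ w + 2 * f₃ w) z = deriv f₂ z + 2 * deriv f₃ z := by
    rw [deriv_fun_add hf₂ (hf₃.const_mul 2), deriv_const_mul_field]
  refine ⟨?_, ?_, ?_⟩
  · rw [deriv.fun_neg]
    linear_combination -h₁
  · rw [deriv_g₂]
    linear_combination h₂ + 2 * h₃
  · linear_combination h₃

theorem pillowcase_narrow_equations_general
    (D : Set ℂ) (hD : IsOpen D)
    (f₁ f₂ f₃ : ℂ → ℂ)
    (hf₂ : DifferentiableOn ℂ f₂ D)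
    (hf₃ : DifferentiableOn ℂ f₃ D)
    (hf : PillowcaseWDVV D f₁ f₂ f₃) :
    ∀ z ∈ D,
      deriv (fun w => -f₁ w) z + 2 * (f₂ z + 2 * f₃ z) * (-f₁ z) =
          4 * (-f₁ z) * f₃ z ∧
      deriv (fun w => f₂ w + 2 * f₃ w) z + 2 * f₃ z * (f₂ z + 2 * f₃ z) + deriv f₃ z =
          2 * (-f₁ z) ^ 2 + 2 * f₃ z ^ 2 ∧
      deriv f₃ z + f₃ z ^ 2 = (-f₁ z) ^ 2 := fun _ hz =>
  hf.narrow_at hz (hf₂.differentiableAt (hD.mem_nhds hz)) (hf₃.differentiableAt (hD.mem_nhds hz))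

/-- If `(f₁, f₂, f₃)` satisfies the pillowcase WDVV system on an open set `D`, then
`g₁ = −f₁`, `g₂ = f₂ + 2f₃`, `g₃ = f₃` satisfy the narrow WDVV equations
`g₁′ + 2g₂g₁ = 4g₁g₃`, `g₂′ + 2g₃g₂ + g₃′ = 2g₁² + 2g₃²`, `g₃′ + g₃² = g₁²`. -/
theorem pillowcase_narrow_equations
    (D : Set ℂ) (hD : IsOpen D)
    (f₁ f₂ f₃ : ℂ → ℂ)
    (hf₁ : DifferentiableOn ℂ f₁ D) (hf₂ : DifferentiableOn ℂ f₂ D)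
    (hf₃ : DifferentiableOn ℂ f₃ D)
    (hf : PillowcaseWDVV D f₁ f₂ f₃) :
    ∀ z ∈ D,
      deriv (fun w => -f₁ w) z + 2 * (f₂ z + 2 * f₃ z) * (-f₁ z) =
          4 * (-f₁ z) * f₃ z ∧
      deriv (fun w => f₂ w + 2 * f₃ w) z + 2 * f₃ z * (f₂ z + 2 * f₃ z) + deriv f₃ z =
          2 * (-f₁ z) ^ 2 + 2 * f₃ z ^ 2 ∧
      deriv f₃ z + f₃ z ^ 2 = (-f₁ z) ^ 2 :=
  pillowcase_narrow_equations_general D hD f₁ f₂ f₃ hf₂ hf₃ hf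
end

section
/- Let D ⊆ ℂ be a connected open set containing 0 and let f₂, f₃, f₄ : D → ℂ be holomorphic satisfying f₂′ + 2f₂f₃ + f₃′ = 0 and f₄′ + 2f₄f₂ + f₂′ = 2f₂² on D, together with f₄(0) = f₂(0) + 2f₃(0). Then f₄ = f₂ + 2f₃ on D. -/
/-!
With `g = f₄ - f₂ - 2f₃`, the second WDVV equation minus twice the first reads `g' = -2f₂g`, and
`g(0) = 0`. On a disc around `0` the coefficient `-2f₂` has a primitive `F`, and `exp(-F)·g` has
zero derivative there, so `g` vanishes on the disc; the identity theorem spreads this over `D`.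
-/

open Complex Metric Set

theorem Complex.eqOn_zero_ball_of_deriv_eq_mul {a g : ℂ → ℂ} {c : ℂ} {r : ℝ}
    (ha : DifferentiableOn ℂ a (ball c r)) (hg : DifferentiableOn ℂ g (ball c r))
    (hderiv : EqOn (deriv g) (a * g) (ball c r)) (hc : g c = 0) :
    EqOn g 0 (ball c r) := by
  intro z hz
  have hc_mem : c ∈ ball c r := mem_ball_self (pos_of_mem_ball hz)
  obtain ⟨F, hF⟩ := ha.isExactOn_ball
  set h : ℂ → ℂ := fun w => exp (-F w) * g w
  have hh : ∀ w ∈ ball c r, HasDerivAt h 0 w := by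
    intro w hw
    have hgw : HasDerivAt g (deriv g w) w :=
      (hg.differentiableAt (isOpen_ball.mem_nhds hw)).hasDerivAt
    refine ((hF w hw).neg.cexp.mul hgw).congr_deriv ?_
    rw [hderiv hw, Pi.mul_apply]
    ring
  have hconst : h z = h c :=
    isOpen_ball.is_const_of_deriv_eq_zero (convex_ball c r).isPreconnected
      (fun w hw => (hh w hw).differentiableAt.differentiableWithinAt)
      (fun w hw => (hh w hw).deriv) hz hc_mem
  simpa [h, hc, exp_ne_zero] using hconst

theorem Complex.eqOn_zero_of_deriv_eq_mul {a g : ℂ → ℂ} {U : Set ℂ} {z₀ : ℂ}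
    (hU : IsOpen U) (hU' : IsPreconnected U) (hz₀ : z₀ ∈ U)
    (ha : DifferentiableOn ℂ a U) (hg : DifferentiableOn ℂ g U)
    (hderiv : EqOn (deriv g) (a * g) U) (h₀ : g z₀ = 0) :
    EqOn g 0 U := by
  obtain ⟨r, hr, hball⟩ := isOpen_iff.mp hU z₀ hz₀
  have hzero_ball : EqOn g 0 (ball z₀ r) :=
    eqOn_zero_ball_of_deriv_eq_mul (ha.mono hball) (hg.mono hball) (hderiv.mono hball) h₀
  exact (hg.analyticOnNhd hU).eqOn_zero_of_preconnected_of_eventuallyEq_zero hU' hz₀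
    (Filter.eventually_of_mem (ball_mem_nhds z₀ hr) hzero_ball)

/-- In the FJRW theory of the pillowcase, the four-broad-point correlation function `f₄`
is determined by `f₂` and `f₃`: from the WDVV equations `f₂′ + 2f₂f₃ + f₃′ = 0` and
`f₄′ + 2f₄f₂ + f₂′ = 2f₂²` and the boundary value `f₄(0) = f₂(0) + 2f₃(0)`, one gets
`f₄ = f₂ + 2f₃`. -/
theorem pillowcase_f4_eq
    (D : Set ℂ) (hD : IsOpen D) (hconn : IsConnected D) (h0 : (0 : ℂ) ∈ D)
    (f₂ f₃ f₄ : ℂ → ℂ)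
    (hf₂ : DifferentiableOn ℂ f₂ D) (hf₃ : DifferentiableOn ℂ f₃ D)
    (hf₄ : DifferentiableOn ℂ f₄ D)
    (heq1 : ∀ z ∈ D, deriv f₂ z + 2 * f₂ z * f₃ z + deriv f₃ z = 0)
    (heq2 : ∀ z ∈ D, deriv f₄ z + 2 * f₄ z * f₂ z + deriv f₂ z = 2 * f₂ z ^ 2)
    (h0val : f₄ 0 = f₂ 0 + 2 * f₃ 0) :
    ∀ z ∈ D, f₄ z = f₂ z + 2 * f₃ z := by
  set g : ℂ → ℂ := fun z => f₄ z - f₂ z - 2 * f₃ z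
  have hg : DifferentiableOn ℂ g D := (hf₄.sub hf₂).sub (hf₃.const_mul 2)
  have hderiv : EqOn (deriv g) ((fun z => -2 * f₂ z) * g) D := by
    intro z hz
    have hdiff {f : ℂ → ℂ} (hf : DifferentiableOn ℂ f D) : HasDerivAt f (deriv f z) z :=
      (hf.differentiableAt (hD.mem_nhds hz)).hasDerivAt
    rw [(((hdiff hf₄).fun_sub (hdiff hf₂)).fun_sub ((hdiff hf₃).const_mul 2)).deriv, Pi.mul_apply]
    linear_combination heq2 z hz - 2 * heq1 z hz
  have hg0 : g 0 = 0 := by simp only [g]; linear_combination h0val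
  intro z hz
  have hgz : g z = 0 := eqOn_zero_of_deriv_eq_mul hD hconn.isPreconnected h0
    (hf₂.const_mul (-2)) hg hderiv hg0 hz
  linear_combination hgz
end

section
/- Let U ⊆ ℂ be open and let A, C, E : U → ℂ be holomorphic functions satisfying the system C′ = (1/8)·C·(E + A²), A·A′ = (1/8)·(A²·E + 2C⁴ − A⁴), E′ = (1/8)·(E² − A⁴) on U. Define F₁ = −C²/4, F₂ = −(E + A²)/8, F₃ = (−E + A²)/8. Then (F₁, F₂, F₃) satisfies the pillowcase WDVV system on U: F₁′ + 2F₁F₂ = 0, F₂′ + 2F₂F₃ + F₃′ = 0, and F₃′ + F₃² = F₁². -/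
open Complex

/-!
`A` enters the Ramanujan system and the functions `F₁, F₂, F₃` only through `P = A²`, and
`A·A′ = P′/2`, so the system becomes the polynomial system `C′ = C(E + P)/8`,
`P′ = (PE + 2C⁴ − P²)/4`, `E′ = (E² − P²)/8` in `(C, P, E)`. Each WDVV equation is then a
linear combination of these: the first is `−C/2` times the equation for `C′`, the second is
`−1/4` times the one for `E′`, and the third combines those for `P′` and `E′`.
-/

theorem pillowcaseWDVV_of_hasDerivAt {U : Set ℂ} {C P E C' P' E' : ℂ → ℂ}
    (hC : ∀ z ∈ U, HasDerivAt C (C' z) z) (hP : ∀ z ∈ U, HasDerivAt P (P' z) z)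
    (hE : ∀ z ∈ U, HasDerivAt E (E' z) z)
    (hsys : ∀ z ∈ U,
      C' z = 1 / 8 * C z * (E z + P z) ∧
      P' z = 1 / 4 * (P z * E z + 2 * C z ^ 4 - P z ^ 2) ∧
      E' z = 1 / 8 * (E z ^ 2 - P z ^ 2)) :
    PillowcaseWDVV U
      (fun z => -(C z ^ 2) / 4)
      (fun z => -(E z + P z) / 8)
      (fun z => (-E z + P z) / 8) := by
  intro z hz
  obtain ⟨hC', hP', hE'⟩ := hsys z hz
  rw [(((hC z hz).fun_pow 2).fun_neg.div_const 4).deriv,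
    (((hE z hz).fun_add (hP z hz)).fun_neg.div_const 8).deriv,
    (((hE z hz).fun_neg.fun_add (hP z hz)).div_const 8).deriv]
  refine ⟨?_, ?_, ?_⟩
  · linear_combination (-(C z) / 2) * hC'
  · linear_combination (-1 / 4 : ℂ) * hE'
  · linear_combination (1 / 8 : ℂ) * hP' - (1 / 8 : ℂ) * hE'

/-- If `(A, C, E)` satisfies the `r = 4` Ramanujan system
`C′ = (1/8)C(E + A²)`, `A·A′ = (1/8)(A²E + 2C⁴ − A⁴)`, `E′ = (1/8)(E² − A⁴)`,
then `F₁ = −C²/4`, `F₂ = −(E + A²)/8`, `F₃ = (−E + A²)/8` satisfy the pillowcase WDVV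
system. -/
theorem ramanujan_r4_to_pillowcaseWDVV
    (U : Set ℂ) (hU : IsOpen U)
    (A C E : ℂ → ℂ)
    (hA : DifferentiableOn ℂ A U) (hC : DifferentiableOn ℂ C U)
    (hE : DifferentiableOn ℂ E U)
    (hsys : ∀ z ∈ U,
      deriv C z = 1 / 8 * C z * (E z + A z ^ 2) ∧
      A z * deriv A z = 1 / 8 * (A z ^ 2 * E z + 2 * C z ^ 4 - A z ^ 4) ∧
      deriv E z = 1 / 8 * (E z ^ 2 - A z ^ 4)) :
    PillowcaseWDVV U
      (fun z => -(C z ^ 2) / 4)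
      (fun z => -(E z + A z ^ 2) / 8)
      (fun z => (-E z + A z ^ 2) / 8) := by
  have hderiv {f : ℂ → ℂ} (hf : DifferentiableOn ℂ f U) (z : ℂ) (hz : z ∈ U) :
      HasDerivAt f (deriv f z) z :=
    hf.hasDerivAt (hU.mem_nhds hz)
  have hA_sq (z : ℂ) (hz : z ∈ U) :
      HasDerivAt (fun z => A z ^ 2) (2 * A z * deriv A z) z := by
    simpa using (hderiv hA z hz).fun_pow 2
  refine pillowcaseWDVV_of_hasDerivAt (hderiv hC) hA_sq (hderiv hE) fun z hz => ?_
  obtain ⟨hC', hAA', hE'⟩ := hsys z hz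
  exact ⟨hC', by linear_combination 2 * hAA', by linear_combination hE'⟩
end
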